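/- Let n ≥ 1 and let u, v : ℝⁿ → ℝ be twice continuously differentiable functions such that ∫_{ℝⁿ} ( |u|·|∇v| + |∇u|·|∇v| + |u·ℒv| ) e^{−|x|²/4} dx < ∞, where ℒv = Δv − ½⟨x, ∇v⟩. Then ∫_{ℝⁿ} u·(ℒv) e^{−|x|²/4} dx = − ∫_{ℝⁿ} ⟨∇u, ∇v⟩ e^{−|x|²/4} dx. -/

import Mathlib

noncomputable section
open Real MeasureTheory
open scoped RealInnerProductSpace

/-- The Laplacian of `v : ℝⁿ → ℝ` as the trace of the Hessian. -/
def lap {n : ℕ} (v : EuclideanSpace ℝ (Fin n) → ℝ) (x : EuclideanSpace ℝ (Fin n)) : ℝ :=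
  ∑ i : Fin n,
    fderiv ℝ (fun y => fderiv ℝ v y (EuclideanSpace.single i 1)) x (EuclideanSpace.single i 1)

/-- The drift Laplacian `ℒv = Δv − ½⟨x, ∇v⟩` on `ℝⁿ`. -/
def Ldrift {n : ℕ} (v : EuclideanSpace ℝ (Fin n) → ℝ) (x : EuclideanSpace ℝ (Fin n)) : ℝ :=
  lap v x - (1/2) * ⟪x, gradient v x⟫

set_option maxHeartbeats 1000000

namespace Stmt3Aux

variable {n : ℕ}
local notation "E" => EuclideanSpace ℝ (Fin n)

/-! ### Basic gradient/fderiv lemmas -/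

lemma decomp (a : E) : a = ∑ i : Fin n, a i • EuclideanSpace.single i (1:ℝ) := by
  have h := (EuclideanSpace.basisFun (Fin n) ℝ).sum_repr a
  simp only [EuclideanSpace.basisFun_repr, EuclideanSpace.basisFun_apply] at h
  exact h.symm

lemma clm_apply_eq_sum (L : E →L[ℝ] ℝ) (a : E) :
    L a = ∑ i : Fin n, a i * L (EuclideanSpace.single i 1) := by
  conv_lhs => rw [decomp a]
  rw [map_sum]
  simp

lemma inner_grad_eq (f : E → ℝ) (x y : E) : ⟪gradient f x, y⟫ = fderiv ℝ f x y :=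
  InnerProductSpace.toDual_symm_apply

lemma fderiv_single_eq (v : E → ℝ) (x : E) (i : Fin n) :
    fderiv ℝ v x (EuclideanSpace.single i 1) = gradient v x i := by
  rw [← inner_grad_eq, EuclideanSpace.inner_single_right]
  simp

lemma sum_fderiv_mul (L : E →L[ℝ] ℝ) (v : E → ℝ) (x : E) :
    ∑ i : Fin n, L (EuclideanSpace.single i 1) * fderiv ℝ v x (EuclideanSpace.single i 1)
      = L (gradient v x) := by
  rw [clm_apply_eq_sum L (gradient v x)]
  refine Finset.sum_congr rfl fun i _ => ?_
  rw [fderiv_single_eq]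
  ring

/-! ### Integral of a derivative of a compactly supported `C¹` function vanishes -/

lemma integral_fderiv_eq_zero (f : E → ℝ) (hf : ContDiff ℝ 1 f)
    (hsupp : HasCompactSupport f) (y : E) :
    ∫ x : E, fderiv ℝ f x y = 0 := by
  have hderiv_cont : Continuous fun x : E => fderiv ℝ f x y :=
    (hf.continuous_fderiv (by simp)).clm_apply continuous_const
  have hderiv_supp : HasCompactSupport fun x : E => fderiv ℝ f x y :=
    (hsupp.fderiv ℝ).comp_left (g := fun L : E →L[ℝ] ℝ => L y) rfl
  have hint1 : Integrable (fun x : E => fderiv ℝ f x y) :=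
    hderiv_cont.integrable_of_hasCompactSupport hderiv_supp
  have hint2 : Integrable f := hf.continuous.integrable_of_hasCompactSupport hsupp
  have h := integral_mul_fderiv_eq_neg_fderiv_mul_of_integrable
    (μ := (volume : Measure E)) (f := f) (g := fun _ => (1:ℝ)) (v := y)
    (by simpa using hint1) (by simp) (by simpa using hint2)
    (fun x _ => hf.differentiable (by simp) x) (fun x _ => differentiable_const (1:ℝ) x)
  simp only [fderiv_fun_const, Pi.zero_apply, ContinuousLinearMap.zero_apply, mul_zero, mul_one,
    integral_zero] at h
  linarith [h]

/-! ### The Gaussian weight -/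

def wt {n : ℕ} (x : EuclideanSpace ℝ (Fin n)) : ℝ := Real.exp (-‖x‖ ^ 2 / 4)

lemma wt_contDiff : ContDiff ℝ (⊤ : ℕ∞) (wt (n := n)) :=
  Real.contDiff_exp.comp ((contDiff_norm_sq ℝ).neg.div_const 4)

lemma wt_pos (x : E) : 0 < wt x := Real.exp_pos _

lemma wt_hasFDerivAt (x : E) :
    HasFDerivAt (wt (n := n)) ((-(wt x) / 2) • (innerSL ℝ x)) x := by
  have h1 : HasFDerivAt (fun x : E => -‖x‖ ^ 2 / 4)
      ((-(1:ℝ)/4) • (2 • (innerSL ℝ x))) x := by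
    have := (((hasFDerivAt_id x).norm_sq).neg.const_smul ((4:ℝ)⁻¹))
    refine HasFDerivAt.congr_fderiv (this.congr_of_eventuallyEq (Filter.Eventually.of_forall fun y => ?_)) ?_
    · simp; ring
    · ext y; simp; ring
  have := (Real.hasDerivAt_exp (-‖x‖ ^ 2 / 4)).comp_hasFDerivAt x h1
  refine HasFDerivAt.congr_fderiv this ?_
  ext y
  simp [wt, smul_smul]
  ring

lemma wt_fderiv_apply (x y : E) : fderiv ℝ (wt (n := n)) x y = -(wt x) / 2 * ⟪x, y⟫ := by
  rw [(wt_hasFDerivAt x).fderiv]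
  simp [real_inner_comm]

/-! ### The divergence identity -/

lemma divergence_identity (u v q : E → ℝ) (hu : ContDiff ℝ 2 u) (hv : ContDiff ℝ 2 v)
    (hq : ContDiff ℝ 1 q) (x : E) :
    ∑ i : Fin n, fderiv ℝ
        (fun y => q y * u y * wt y * fderiv ℝ v y (EuclideanSpace.single i 1)) x
        (EuclideanSpace.single i 1)
      = q x * ((u x * Ldrift v x + ⟪gradient u x, gradient v x⟫) * wt x)
        + u x * wt x * fderiv ℝ q x (gradient v x) := by
  classical
  set P : E → ℝ := fun y => q y * u y * wt y with hP
  have hqd : Differentiable ℝ q := hq.differentiable (by simp)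
  have hud : Differentiable ℝ u := hu.differentiable (by norm_num)
  have hvd : Differentiable ℝ v := hv.differentiable (by norm_num)
  have hwd : Differentiable ℝ (wt (n := n)) := wt_contDiff.differentiable (by simp)
  have hPd : Differentiable ℝ P := ((hqd.mul hud).mul hwd)
  have hG : ∀ i : Fin n,
      Differentiable ℝ (fun y : E => fderiv ℝ v y (EuclideanSpace.single i 1)) := by
    intro i
    have : ContDiff ℝ 1 (fderiv ℝ v) := hv.fderiv_right (by norm_num)
    exact (this.clm_apply contDiff_const).differentiable (by simp)
  have step1 : ∀ i : Fin n,
      fderiv ℝ (fun y => P y * fderiv ℝ v y (EuclideanSpace.single i 1)) x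
          (EuclideanSpace.single i 1)
        = fderiv ℝ P x (EuclideanSpace.single i 1) * fderiv ℝ v x (EuclideanSpace.single i 1)
          + P x * fderiv ℝ (fun y => fderiv ℝ v y (EuclideanSpace.single i 1)) x
              (EuclideanSpace.single i 1) := by
    intro i
    rw [fderiv_fun_mul (hPd x) (hG i x)]
    simp only [ContinuousLinearMap.add_apply, ContinuousLinearMap.smul_apply, smul_eq_mul]
    ring
  calc ∑ i : Fin n, fderiv ℝ
        (fun y => q y * u y * wt y * fderiv ℝ v y (EuclideanSpace.single i 1)) x
        (EuclideanSpace.single i 1)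
      = ∑ i : Fin n,
        (fderiv ℝ P x (EuclideanSpace.single i 1) * fderiv ℝ v x (EuclideanSpace.single i 1)
          + P x * fderiv ℝ (fun y => fderiv ℝ v y (EuclideanSpace.single i 1)) x
              (EuclideanSpace.single i 1)) := Finset.sum_congr rfl (fun i _ => step1 i)
    _ = fderiv ℝ P x (gradient v x) + P x * lap v x := by
        rw [Finset.sum_add_distrib, sum_fderiv_mul, ← Finset.mul_sum]; rfl
    _ = q x * ((u x * Ldrift v x + ⟪gradient u x, gradient v x⟫) * wt x)
        + u x * wt x * fderiv ℝ q x (gradient v x) := by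
        have e1 : fderiv ℝ P x = (q x * u x) • fderiv ℝ (wt (n := n)) x
            + wt x • fderiv ℝ (fun y => q y * u y) x :=
          fderiv_fun_mul ((hqd x).mul (hud x)) (hwd x)
        have e2 : fderiv ℝ (fun y => q y * u y) x = q x • fderiv ℝ u x + u x • fderiv ℝ q x :=
          fderiv_fun_mul (hqd x) (hud x)
        have e3 : fderiv ℝ u x (gradient v x) = ⟪gradient u x, gradient v x⟫ :=
          (inner_grad_eq u x (gradient v x)).symm
        rw [e1]
        simp only [ContinuousLinearMap.add_apply, ContinuousLinearMap.smul_apply, smul_eq_mul,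
          e2, e3, wt_fderiv_apply]
        simp only [Ldrift, P]
        ring

/-! ### Cutoff functions -/

def chi (b : ContDiffBump (0 : E)) (c : ℝ) : E → ℝ := fun x => b (c⁻¹ • x)

lemma chi_contDiff (b : ContDiffBump (0 : E)) (c : ℝ) : ContDiff ℝ 1 (chi b c) :=
  (b.contDiff (n := 1)).comp (contDiff_const_smul c⁻¹)

lemma chi_compactSupport (b : ContDiffBump (0 : E)) (c : ℝ) (hc : 1 ≤ c) :
    HasCompactSupport (chi b c) := by
  have hcne : c⁻¹ ≠ 0 := inv_ne_zero (by linarith)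
  exact b.hasCompactSupport.comp_homeomorph (Homeomorph.smulOfNeZero c⁻¹ hcne)

lemma chi_le_one (b : ContDiffBump (0 : E)) (c : ℝ) (x : E) : |chi b c x| ≤ 1 := by
  rw [abs_le]
  constructor
  · have := b.nonneg (x := c⁻¹ • x)
    simp only [chi]; linarith
  · exact b.le_one

lemma chi_eq_one (b : ContDiffBump (0 : E)) (c : ℝ) (hb : b.rIn = 1) (hc : 1 ≤ c)
    {x : E} (hx : ‖x‖ ≤ c) : chi b c x = 1 := by
  apply b.one_of_mem_closedBall
  simp only [Metric.mem_closedBall, dist_zero_right, hb]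
  rw [norm_smul]
  have h0 : (0:ℝ) < c := by linarith
  calc ‖c⁻¹‖ * ‖x‖ = c⁻¹ * ‖x‖ := by rw [Real.norm_eq_abs, abs_of_pos (by positivity)]
    _ ≤ c⁻¹ * c := by gcongr
    _ = 1 := inv_mul_cancel₀ (ne_of_gt h0)

lemma chi_hasFDerivAt (b : ContDiffBump (0 : E)) (c : ℝ) (hc : 1 ≤ c) (x : E) :
    HasFDerivAt (chi b c) ((fderiv ℝ (⇑b) (c⁻¹ • x)).comp
      (c⁻¹ • ContinuousLinearMap.id ℝ (EuclideanSpace ℝ (Fin n)))) x := by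
  have h1 : HasFDerivAt (fun y : E => c⁻¹ • y)
      (c⁻¹ • ContinuousLinearMap.id ℝ (EuclideanSpace ℝ (Fin n))) x :=
    (hasFDerivAt_id x).const_smul c⁻¹
  exact (((b.contDiff (n := 1)).differentiable (by simp)) (c⁻¹ • x)).hasFDerivAt.comp x h1

lemma chi_fderiv_apply (b : ContDiffBump (0 : E)) (c : ℝ) (hc : 1 ≤ c) (x y : E) :
    fderiv ℝ (chi b c) x y = fderiv ℝ (⇑b) (c⁻¹ • x) (c⁻¹ • y) := by
  rw [(chi_hasFDerivAt b c hc x).fderiv]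
  simp

lemma chi_fderiv_eq_zero (b : ContDiffBump (0 : E)) (c : ℝ) (hb : b.rIn = 1) (hc : 1 ≤ c)
    {x : E} (hx : ‖x‖ < c) : fderiv ℝ (chi b c) x = 0 := by
  have hev : chi b c =ᶠ[nhds x] (fun _ => (1:ℝ)) := by
    have : Metric.ball (0:E) c ∈ nhds x := by
      apply Metric.isOpen_ball.mem_nhds; simpa [Metric.mem_ball, dist_zero_right] using hx
    filter_upwards [this] with y hy
    exact chi_eq_one b c hb hc (le_of_lt (by simpa [Metric.mem_ball, dist_zero_right] using hy))
  rw [hev.fderiv_eq, fderiv_fun_const]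
  rfl

lemma bump_fderiv_bound (b : ContDiffBump (0 : E)) :
    ∃ C : ℝ, 0 ≤ C ∧ ∀ z : E, ‖fderiv ℝ (⇑b) z‖ ≤ C := by
  have hcont : Continuous fun z : E => ‖fderiv ℝ (⇑b) z‖ :=
    ((b.contDiff (n := 1)).continuous_fderiv (by simp)).norm
  have hsupp : HasCompactSupport fun z : E => ‖fderiv ℝ (⇑b) z‖ :=
    (b.hasCompactSupport.fderiv ℝ).norm
  obtain ⟨C, hC⟩ := hcont.bddAbove_range_of_hasCompactSupport hsupp
  rw [upperBounds] at hC
  refine ⟨C, le_trans (norm_nonneg _) (hC ⟨0, rfl⟩), fun z => hC ⟨z, rfl⟩⟩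

end Stmt3Aux

open Stmt3Aux

/-- Integration by parts for the drift Laplacian in the Gaussian weighted
`L²` space on `ℝⁿ`, for `C²` functions with the weighted integrability
`∫ (|u||∇v| + |∇u||∇v| + |u ℒv|) e^{−|x|²/4} < ∞`. -/
theorem stmt3 (n : ℕ) (hn : 1 ≤ n)
    (u v : EuclideanSpace ℝ (Fin n) → ℝ)
    (hu : ContDiff ℝ 2 u) (hv : ContDiff ℝ 2 v)
    (hint : Integrable (fun x : EuclideanSpace ℝ (Fin n) =>
      (|u x| * ‖gradient v x‖ + ‖gradient u x‖ * ‖gradient v x‖ + |u x * Ldrift v x|) *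
        Real.exp (-‖x‖ ^ 2 / 4))) :
    ∫ x : EuclideanSpace ℝ (Fin n), u x * Ldrift v x * Real.exp (-‖x‖ ^ 2 / 4)
      = -∫ x : EuclideanSpace ℝ (Fin n),
          ⟪gradient u x, gradient v x⟫ * Real.exp (-‖x‖ ^ 2 / 4) := by
  classical
  have hwt_def : ∀ x : EuclideanSpace ℝ (Fin n), Real.exp (-‖x‖ ^ 2 / 4) = wt x := fun _ => rfl
  simp only [hwt_def] at hint ⊢
  -- continuity facts
  have hgradv_cont : Continuous (gradient v) := by
    have : Continuous (fderiv ℝ v) := hv.continuous_fderiv (by norm_num)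
    exact ((InnerProductSpace.toDual ℝ (EuclideanSpace ℝ (Fin n))).symm.continuous).comp this
  have hgradu_cont : Continuous (gradient u) := by
    have : Continuous (fderiv ℝ u) := hu.continuous_fderiv (by norm_num)
    exact ((InnerProductSpace.toDual ℝ (EuclideanSpace ℝ (Fin n))).symm.continuous).comp this
  have hlap_cont : Continuous (lap v) := by
    apply continuous_finset_sum
    intro i _
    have hGi : ContDiff ℝ 1 (fun y => fderiv ℝ v y (EuclideanSpace.single i 1)) :=
      (hv.fderiv_right (by norm_num)).clm_apply contDiff_const
    exact (hGi.continuous_fderiv (by simp)).clm_apply continuous_const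
  have hLd_cont : Continuous (Ldrift v) := by
    apply hlap_cont.sub
    exact continuous_const.mul (continuous_id.inner hgradv_cont)
  have hwt_cont : Continuous (wt (n := n)) := wt_contDiff.continuous
  have hucont : Continuous u := hu.continuous
  -- integrabilities extracted from `hint`
  set g : EuclideanSpace ℝ (Fin n) → ℝ := fun x =>
    (|u x| * ‖gradient v x‖ + ‖gradient u x‖ * ‖gradient v x‖ + |u x * Ldrift v x|) * wt x
    with hg
  have hg_bound : ∀ x, |u x * Ldrift v x| * wt x ≤ g x ∧
      |⟪gradient u x, gradient v x⟫| * wt x ≤ g x ∧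
      |u x| * ‖gradient v x‖ * wt x ≤ g x := by
    intro x
    have h0 : 0 < wt x := wt_pos x
    have h1 : 0 ≤ |u x| * ‖gradient v x‖ := by positivity
    have h2 : 0 ≤ ‖gradient u x‖ * ‖gradient v x‖ := by positivity
    have h3 : 0 ≤ |u x * Ldrift v x| := abs_nonneg _
    have h4 : |⟪gradient u x, gradient v x⟫| ≤ ‖gradient u x‖ * ‖gradient v x‖ :=
      abs_real_inner_le_norm _ _
    refine ⟨?_, ?_, ?_⟩ <;> simp only [hg] <;> nlinarith
  have hint1 : Integrable (fun x : EuclideanSpace ℝ (Fin n) => u x * Ldrift v x * wt x) := by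
    refine hint.mono ((hucont.mul hLd_cont).mul hwt_cont).aestronglyMeasurable
      (Filter.Eventually.of_forall fun x => ?_)
    have := (hg_bound x).1
    rw [Real.norm_eq_abs, Real.norm_eq_abs, abs_mul, abs_of_pos (wt_pos x)]
    exact le_trans this (le_abs_self _)
  have hint2 : Integrable (fun x : EuclideanSpace ℝ (Fin n) =>
      ⟪gradient u x, gradient v x⟫ * wt x) := by
    refine hint.mono ((hgradu_cont.inner hgradv_cont).mul hwt_cont).aestronglyMeasurable
      (Filter.Eventually.of_forall fun x => ?_)
    have := (hg_bound x).2.1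
    rw [Real.norm_eq_abs, Real.norm_eq_abs, abs_mul, abs_of_pos (wt_pos x)]
    exact le_trans this (le_abs_self _)
  have hint3 : Integrable (fun x : EuclideanSpace ℝ (Fin n) =>
      |u x| * ‖gradient v x‖ * wt x) := by
    refine hint.mono (((hucont.abs.mul hgradv_cont.norm).mul hwt_cont)).aestronglyMeasurable
      (Filter.Eventually.of_forall fun x => ?_)
    have := (hg_bound x).2.2
    rw [Real.norm_eq_abs, Real.norm_eq_abs, abs_mul, abs_of_pos (wt_pos x)]
    rw [abs_of_nonneg (by positivity : (0:ℝ) ≤ |u x| * ‖gradient v x‖)]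
    exact le_trans this (le_abs_self _)
  -- the bump function
  set b : ContDiffBump (0 : EuclideanSpace ℝ (Fin n)) := ⟨1, 2, one_pos, one_lt_two⟩ with hbdef
  have hbIn : b.rIn = 1 := rfl
  obtain ⟨C, hC0, hC⟩ := bump_fderiv_bound b
  set H : EuclideanSpace ℝ (Fin n) → ℝ := fun x =>
    u x * Ldrift v x + ⟪gradient u x, gradient v x⟫ with hH
  set A : ℕ → EuclideanSpace ℝ (Fin n) → ℝ := fun k x =>
    chi b ((k:ℝ)+1) x * (H x * wt x) with hA
  set B : ℕ → EuclideanSpace ℝ (Fin n) → ℝ := fun k x =>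
    u x * wt x * fderiv ℝ (chi b ((k:ℝ)+1)) x (gradient v x) with hB
  have hc1 : ∀ k : ℕ, (1:ℝ) ≤ (k:ℝ)+1 := fun k => by have := Nat.cast_nonneg (α := ℝ) k; linarith
  -- integrability of A and B
  have hAcont : ∀ k, Continuous (A k) := fun k =>
    ((chi_contDiff b _).continuous).mul ((hucont.mul hLd_cont).add
      (hgradu_cont.inner hgradv_cont) |>.mul hwt_cont)
  have hAint : ∀ k, Integrable (A k) := by
    intro k
    apply (hAcont k).integrable_of_hasCompactSupport
    exact (chi_compactSupport b _ (hc1 k)).mul_right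
  have hBcont : ∀ k, Continuous (B k) := by
    intro k
    refine (hucont.mul hwt_cont).mul ?_
    exact (((chi_contDiff b _).continuous_fderiv (by simp)).clm_apply hgradv_cont)
  have hBsupp : ∀ k, HasCompactSupport (B k) := by
    intro k
    have h1 : HasCompactSupport (fderiv ℝ (chi b ((k:ℝ)+1))) :=
      (chi_compactSupport b _ (hc1 k)).fderiv ℝ
    have h2 : HasCompactSupport
        (fun x => fderiv ℝ (chi b ((k:ℝ)+1)) x (gradient v x)) := by
      apply h1.mono'
      intro x hx
      apply subset_closure
      simp only [Function.mem_support] at hx ⊢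
      intro h0
      exact hx (by rw [h0]; rfl)
    exact h2.mul_left
  have hBint : ∀ k, Integrable (B k) := fun k =>
    (hBcont k).integrable_of_hasCompactSupport (hBsupp k)
  -- the key identity coming from the divergence theorem
  have key : ∀ k : ℕ, ∫ x, A k x = - ∫ x, B k x := by
    intro k
    have hc : (1:ℝ) ≤ (k:ℝ)+1 := hc1 k
    have hGi : ∀ i : Fin n, ContDiff ℝ 1
        (fun y : EuclideanSpace ℝ (Fin n) => fderiv ℝ v y (EuclideanSpace.single i 1)) :=
      fun i => (hv.fderiv_right (by norm_num)).clm_apply contDiff_const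
    have hFcd : ∀ i : Fin n, ContDiff ℝ 1 (fun y : EuclideanSpace ℝ (Fin n) =>
        chi b ((k:ℝ)+1) y * u y * wt y * fderiv ℝ v y (EuclideanSpace.single i 1)) :=
      fun i => (((chi_contDiff b _).mul (hu.of_le (by norm_num))).mul
        (wt_contDiff.of_le (mod_cast le_top))).mul (hGi i)
    have hFsupp : ∀ i : Fin n, HasCompactSupport (fun y : EuclideanSpace ℝ (Fin n) =>
        chi b ((k:ℝ)+1) y * u y * wt y * fderiv ℝ v y (EuclideanSpace.single i 1)) :=
      fun i => (((chi_compactSupport b _ hc).mul_right).mul_right).mul_right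
    have hzero : ∀ i : Fin n, ∫ x : EuclideanSpace ℝ (Fin n), fderiv ℝ
        (fun y => chi b ((k:ℝ)+1) y * u y * wt y * fderiv ℝ v y (EuclideanSpace.single i 1)) x
        (EuclideanSpace.single i 1) = 0 :=
      fun i => integral_fderiv_eq_zero _ (hFcd i) (hFsupp i) _
    have hDi : ∀ i : Fin n, Integrable (fun x : EuclideanSpace ℝ (Fin n) => fderiv ℝ
        (fun y => chi b ((k:ℝ)+1) y * u y * wt y * fderiv ℝ v y (EuclideanSpace.single i 1)) x
        (EuclideanSpace.single i 1)) :=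
      fun i => (((hFcd i).continuous_fderiv (by simp)).clm_apply
        continuous_const).integrable_of_hasCompactSupport
        (((hFsupp i).fderiv ℝ).comp_left (g := fun L : (EuclideanSpace ℝ (Fin n)) →L[ℝ] ℝ => L (EuclideanSpace.single i 1)) rfl)
    have hsum : ∫ x : EuclideanSpace ℝ (Fin n), ∑ i : Fin n, fderiv ℝ
        (fun y => chi b ((k:ℝ)+1) y * u y * wt y * fderiv ℝ v y (EuclideanSpace.single i 1)) x
        (EuclideanSpace.single i 1) = 0 := by
      rw [integral_finset_sum _ (fun i _ => hDi i)]
      exact Finset.sum_eq_zero fun i _ => hzero i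
    have hdiv : ∀ x : EuclideanSpace ℝ (Fin n), ∑ i : Fin n, fderiv ℝ
        (fun y => chi b ((k:ℝ)+1) y * u y * wt y * fderiv ℝ v y (EuclideanSpace.single i 1)) x
        (EuclideanSpace.single i 1) = A k x + B k x := by
      intro x
      rw [divergence_identity u v (chi b ((k:ℝ)+1)) hu hv (chi_contDiff b _) x]
    have h2 : ∫ x, (A k x + B k x) = 0 := by
      rw [← integral_congr_ae (Filter.Eventually.of_forall hdiv)]
      exact hsum
    rw [integral_add (hAint k) (hBint k)] at h2
    linarith
  -- limits
  have limA : Filter.Tendsto (fun k => ∫ x, A k x) Filter.atTop (nhds (∫ x, H x * wt x)) := by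
    apply tendsto_integral_of_dominated_convergence g
      (fun k => (hAcont k).aestronglyMeasurable) hint
    · intro k
      refine Filter.Eventually.of_forall fun x => ?_
      have h0 : 0 < wt x := wt_pos x
      have hchi : |chi b ((k:ℝ)+1) x| ≤ 1 := chi_le_one b _ x
      have hHx : |H x| ≤ |u x * Ldrift v x| + |⟪gradient u x, gradient v x⟫| := abs_add_le _ _
      have h4 : |⟪gradient u x, gradient v x⟫| ≤ ‖gradient u x‖ * ‖gradient v x‖ :=
        abs_real_inner_le_norm _ _
      have h1 : 0 ≤ |u x| * ‖gradient v x‖ := by positivity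
      rw [Real.norm_eq_abs, hA]
      simp only []
      rw [abs_mul, abs_mul, abs_of_pos h0]
      calc |chi b ((k:ℝ)+1) x| * (|H x| * wt x)
          ≤ 1 * (|H x| * wt x) :=
            mul_le_mul_of_nonneg_right hchi (by positivity)
        _ = |H x| * wt x := one_mul _
        _ ≤ (|u x * Ldrift v x| + ‖gradient u x‖ * ‖gradient v x‖) * wt x :=
            mul_le_mul_of_nonneg_right (by linarith) h0.le
        _ ≤ g x := by
            simp only [hg]
            exact mul_le_mul_of_nonneg_right (by linarith) h0.le
    · refine Filter.Eventually.of_forall fun x => ?_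
      obtain ⟨k₀, hk₀⟩ := exists_nat_ge ‖x‖
      refine Filter.Tendsto.congr' ?_ (tendsto_const_nhds (x := H x * wt x))
      rw [Filter.EventuallyEq, Filter.eventually_atTop]
      refine ⟨k₀, fun k hk => ?_⟩
      have hxk : ‖x‖ ≤ (k:ℝ)+1 := by
        have : (k₀:ℝ) ≤ (k:ℝ) := Nat.cast_le.2 hk
        linarith
      simp only [hA, chi_eq_one b _ hbIn (hc1 k) hxk, one_mul]
  have limB : Filter.Tendsto (fun k => ∫ x, B k x) Filter.atTop (nhds 0) := by
    have h := tendsto_integral_of_dominated_convergence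
      (F := B) (f := fun _ => (0:ℝ)) (μ := volume)
      (fun x => C * (|u x| * ‖gradient v x‖ * wt x))
      (fun k => (hBcont k).aestronglyMeasurable) (hint3.const_mul C) ?_ ?_
    · simpa using h
    · intro k
      refine Filter.Eventually.of_forall fun x => ?_
      have hc : (1:ℝ) ≤ (k:ℝ)+1 := hc1 k
      have hcpos : (0:ℝ) < (k:ℝ)+1 := by linarith
      have h0 : 0 < wt x := wt_pos x
      have hder : |fderiv ℝ (chi b ((k:ℝ)+1)) x (gradient v x)| ≤ C * ‖gradient v x‖ := by
        rw [chi_fderiv_apply b _ hc]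
        calc |fderiv ℝ (⇑b) (((k:ℝ)+1)⁻¹ • x) (((k:ℝ)+1)⁻¹ • gradient v x)|
            ≤ ‖fderiv ℝ (⇑b) (((k:ℝ)+1)⁻¹ • x)‖ * ‖((k:ℝ)+1)⁻¹ • gradient v x‖ :=
              (fderiv ℝ (⇑b) _).le_opNorm _
          _ ≤ C * ‖((k:ℝ)+1)⁻¹ • gradient v x‖ := by gcongr; exact hC _
          _ ≤ C * ‖gradient v x‖ := by
              gcongr
              rw [norm_smul, Real.norm_eq_abs, abs_of_pos (by positivity)]
              have hinv : ((k:ℝ)+1)⁻¹ ≤ 1 := by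
                rw [inv_le_one_iff₀]; right; linarith
              nlinarith [norm_nonneg (gradient v x)]
      rw [Real.norm_eq_abs, hB]
      simp only []
      rw [abs_mul, abs_mul, abs_of_pos h0]
      calc |u x| * wt x * |fderiv ℝ (chi b ((k:ℝ)+1)) x (gradient v x)|
          ≤ |u x| * wt x * (C * ‖gradient v x‖) :=
            mul_le_mul_of_nonneg_left hder (by positivity)
        _ = C * (|u x| * ‖gradient v x‖ * wt x) := by ring
    · refine Filter.Eventually.of_forall fun x => ?_
      obtain ⟨k₀, hk₀⟩ := exists_nat_ge ‖x‖
      refine Filter.Tendsto.congr' ?_ (tendsto_const_nhds (x := (0:ℝ)))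
      rw [Filter.EventuallyEq, Filter.eventually_atTop]
      refine ⟨k₀, fun k hk => ?_⟩
      have hxk : ‖x‖ < (k:ℝ)+1 := by
        have : (k₀:ℝ) ≤ (k:ℝ) := Nat.cast_le.2 hk
        linarith
      simp only [hB, chi_fderiv_eq_zero b _ hbIn (hc1 k) hxk]
      simp
  have hHint : ∫ x, H x * wt x = 0 := by
    have : Filter.Tendsto (fun k => ∫ x, A k x) Filter.atTop (nhds 0) := by
      simp only [key]
      simpa using limB.neg
    exact tendsto_nhds_unique limA this
  have hsplit : ∫ x, H x * wt x
      = (∫ x, u x * Ldrift v x * wt x) + ∫ x, ⟪gradient u x, gradient v x⟫ * wt x := by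
    rw [← integral_add hint1 hint2]
    congr 1
    ext x
    simp only [hH]
    ring
  rw [hsplit] at hHint
  linarith
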